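/- Let $\varepsilon > 0$, $\alpha = 2\varepsilon^2$, and define $w(\eta) = \eta^{1+\alpha}$ for $\eta \in [0,1]$. Let $u : [-1,1] \to \mathbb{R}$ be $C^2$ with $-1 < u(x) \le 0$ and $0 \le u''(x) < 2$ for all $x$. Then for all $(x,\eta) \in (-1,1) \times (0,1)$, the quantity $(\mathcal{L}_u w)(x,\eta) := \frac{1+\varepsilon^2\eta^2 (u'(x))^2}{(1+u(x))^2} \alpha(1+\alpha)\eta^{\alpha-1} + \varepsilon^2 (1+\alpha) \eta^{1+\alpha} \left[ 2\left(\frac{u'(x)}{1+u(x)}\right)^2 - \frac{u''(x)}{1+u(x)} \right]$ is nonnegative. -/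

import Mathlib

/-!
Clearing the factor `(1 + u)²` and using `η^{1+α} = η^{α-1} η²`, the operator becomes
`(1+α) η^{α-1} / (1+u)²` times `α (1 + ε²η²u'²) + ε²η² (2u'² - (1+u) u'')`. Dropping the
nonnegative `u'²` terms leaves `α - ε²η² (1+u) u'' ≥ α - 2ε²`, since `η ≤ 1`, `0 < 1 + u ≤ 1`
and `u'' < 2`; the choice `α = 2ε²` makes this vanish.
-/

open Set

lemma barrier_operator_eq {ε α η s d c : ℝ} (hη : 0 < η) (hs : s ≠ 0) :
    (1 + ε ^ 2 * η ^ 2 * d ^ 2) / s ^ 2 * (α * (1 + α) * η ^ (α - 1)) +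
        ε ^ 2 * (1 + α) * η ^ (1 + α) * (2 * (d / s) ^ 2 - c / s) =
      (1 + α) * η ^ (α - 1) / s ^ 2 *
        (α * (1 + ε ^ 2 * η ^ 2 * d ^ 2) + ε ^ 2 * η ^ 2 * (2 * d ^ 2 - c * s)) := by
  have hpow : η ^ (1 + α) = η ^ (α - 1) * η ^ 2 := by
    rw [← Real.rpow_natCast, ← Real.rpow_add hη]
    ring_nf
  rw [hpow]
  field_simp

lemma barrier_bracket_nonneg {ε α η s d c : ℝ} (hα : α = 2 * ε ^ 2) (hη₀ : 0 ≤ η)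
    (hη₁ : η ≤ 1) (hs₀ : 0 ≤ s) (hs₁ : s ≤ 1) (hc : c ≤ 2) :
    0 ≤ α * (1 + ε ^ 2 * η ^ 2 * d ^ 2) + ε ^ 2 * η ^ 2 * (2 * d ^ 2 - c * s) := by
  have hcs : c * s ≤ 2 := by nlinarith
  have hη2 : η ^ 2 ≤ 1 := pow_le_one₀ hη₀ hη₁
  have hdrift : ε ^ 2 * η ^ 2 * (c * s) ≤ 2 * ε ^ 2 := by
    calc ε ^ 2 * η ^ 2 * (c * s) ≤ ε ^ 2 * η ^ 2 * 2 := by gcongr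
      _ ≤ 2 * ε ^ 2 := by nlinarith [sq_nonneg ε]
  have hsq : 0 ≤ α * (ε ^ 2 * η ^ 2 * d ^ 2) + ε ^ 2 * η ^ 2 * (2 * d ^ 2) := by
    subst hα; positivity
  nlinarith

theorem stmt8_general (ε : ℝ) (α : ℝ) (hα : α = 2 * ε ^ 2)
    (u : ℝ → ℝ)
    (hrange : ∀ x ∈ Icc (-1:ℝ) 1, -1 < u x ∧ u x ≤ 0)
    (hconv : ∀ x ∈ Icc (-1:ℝ) 1, 0 ≤ deriv (deriv u) x ∧ deriv (deriv u) x < 2) :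
    ∀ x ∈ Ioo (-1:ℝ) 1, ∀ η ∈ Ioo (0:ℝ) 1,
      0 ≤ (1 + ε ^ 2 * η ^ 2 * (deriv u x) ^ 2) / (1 + u x) ^ 2 *
            (α * (1 + α) * η ^ (α - 1)) +
          ε ^ 2 * (1 + α) * η ^ (1 + α) *
            (2 * (deriv u x / (1 + u x)) ^ 2 - deriv (deriv u) x / (1 + u x)) := by
  intro x hx η ⟨hη₀, hη₁⟩
  have hx' : x ∈ Icc (-1:ℝ) 1 := Ioo_subset_Icc_self hx
  obtain ⟨hu₀, hu₁⟩ := hrange x hx'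
  have hs : 0 < 1 + u x := by linarith
  rw [barrier_operator_eq hη₀ hs.ne']
  have hfactor : 0 ≤ (1 + α) * η ^ (α - 1) / (1 + u x) ^ 2 := by subst hα; positivity
  exact mul_nonneg hfactor <| barrier_bracket_nonneg hα hη₀.le hη₁.le hs.le (by linarith)
    (hconv x hx').2.le

/-- the barrier `w(η) = η^{1+α}` with `α = 2ε²` is a subsolution:
`𝓛_u w ≥ 0` on `(-1,1)×(0,1)`. -/
theorem stmt8 (ε : ℝ) (hε : 0 < ε) (α : ℝ) (hα : α = 2 * ε ^ 2)
    (u : ℝ → ℝ) (hu : ContDiff ℝ 2 u)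
    (hrange : ∀ x ∈ Icc (-1:ℝ) 1, -1 < u x ∧ u x ≤ 0)
    (hconv : ∀ x ∈ Icc (-1:ℝ) 1, 0 ≤ deriv (deriv u) x ∧ deriv (deriv u) x < 2) :
    ∀ x ∈ Ioo (-1:ℝ) 1, ∀ η ∈ Ioo (0:ℝ) 1,
      0 ≤ (1 + ε ^ 2 * η ^ 2 * (deriv u x) ^ 2) / (1 + u x) ^ 2 *
            (α * (1 + α) * η ^ (α - 1)) +
          ε ^ 2 * (1 + α) * η ^ (1 + α) *
            (2 * (deriv u x / (1 + u x)) ^ 2 - deriv (deriv u) x / (1 + u x)) :=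
  stmt8_general ε α hα u hrange hconv
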